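/- Fix n ≥ 1, p ≥ 1 and a horizon k ≥ 0. Let π₀ : ℝᵖ × ℝⁿ × ℝⁿ → [0,∞) (joint prior density of (Θ, Z₀, Z₁)), q_i : ℝᵖ × ℝⁿ × ℝⁿ → [0,∞) (1 ≤ i ≤ k, parameterized transition densities) and g_i : ℝᵖ × ℝⁿ → [0,∞) (0 ≤ i ≤ k+1, likelihoods of fixed observations) be measurable. Define f₀(θ,z,z') = π₀(θ,z,z') g₀(θ,z) g₁(θ,z') and f_i(θ,z,z') = q_i(θ,z,z') g_{i+1}(θ,z') for 1 ≤ i ≤ k, and ρ(θ, z₀,…,z_{k+1}) = f₀(θ,z₀,z₁) ∏_{i=1}^{k} f_i(θ,z_i,z_{i+1}); assume ρ is strictly positive with 0 < ∫ρ < ∞ and let Π be the probability measure on ℝᵖ × (ℝⁿ)^{k+2} with density ρ/∫ρ. Let η_Θ (on ℝᵖ, with strictly positive density e_Θ) and η₀,…,η_{k+1} (on ℝⁿ, with strictly positive densities e_i) be absolutely continuous probability measures. Suppose M₀,…,M_k : ℝᵖ × ℝⁿ × ℝⁿ → ℝᵖ × ℝⁿ × ℝⁿ are measurable maps of the form M_i(x_θ,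 x, y) = (M_i^Θ(x_θ), M_i⁰(x_θ, x, y), M_i¹(x_θ, y)) satisfying: c₀ := ∫ f₀ and Measure.map M₀ (η_Θ ⊗ η₀ ⊗ η₁) = measure with density f₀/c₀; and for 1 ≤ i ≤ k, with 𝔗^Θ_{i-1} := M₀^Θ ∘ ⋯ ∘ M_{i-1}^Θ, c_i := ∫∫∫ e_Θ(θ) e_i(x) f_i(𝔗^Θ_{i-1}(θ), M_{i-1}¹(θ,x), y) dθ dx dy ∈ (0,∞) and Measure.map M_i (η_Θ ⊗ η_i ⊗ η_{i+1}) = measure with density (θ,x,y) ↦ e_Θ(θ) e_i(x) f_i(𝔗^Θ_{i-1}(θ), M_{i-1}¹(θ,x), y)/c_i. Then the map (x_θ, x_{k+1}) ↦ (𝔗^Θ_k(x_θ), M_k¹(x_θ, x_{k+1})) pushes η_Θ ⊗ η_{k+1} forward to the marginal of Π on the coordinates (θ, z_{k+1}), i.e., the joint filtering distribution π_{Θ, Z_{k+1} | y_{0:k+1}}. -/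

import Mathlib

open MeasureTheory ProbabilityTheory

/-- The pairwise potentials for a state-space model with static parameters `θ`:
`f₀(θ,z,z') = π₀(θ,z,z') g₀(θ,z) g₁(θ,z')` and `f_i(θ,z,z') = q_i(θ,z,z') g_{i+1}(θ,z')`
for `i ≥ 1`. -/
noncomputable def jpotential {p n : ℕ}
    (π₀ : (Fin p → ℝ) → (Fin n → ℝ) → (Fin n → ℝ) → ℝ)
    (q : ℕ → (Fin p → ℝ) → (Fin n → ℝ) → (Fin n → ℝ) → ℝ)
    (g : ℕ → (Fin p → ℝ) → (Fin n → ℝ) → ℝ) :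
    ℕ → (Fin p → ℝ) → (Fin n → ℝ) → (Fin n → ℝ) → ℝ
  | 0 => fun θ z z' => π₀ θ z z' * g 0 θ z * g 1 θ z'
  | (i + 1) => fun θ z z' => q (i + 1) θ z z' * g (i + 2) θ z'

/-- The unnormalized joint posterior density
`ρ(θ, z₀,…,z_{k+1}) = f₀(θ,z₀,z₁) ∏_{i=1}^{k} f_i(θ,z_i,z_{i+1})`. -/
noncomputable def jsmoothingDensity {p n k : ℕ}
    (π₀ : (Fin p → ℝ) → (Fin n → ℝ) → (Fin n → ℝ) → ℝ)
    (q : ℕ → (Fin p → ℝ) → (Fin n → ℝ) → (Fin n → ℝ) → ℝ)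
    (g : ℕ → (Fin p → ℝ) → (Fin n → ℝ) → ℝ)
    (w : (Fin p → ℝ) × (Fin (k + 2) → Fin n → ℝ)) : ℝ :=
  ∏ i : Fin (k + 1), jpotential π₀ q g i w.1 (w.2 i.castSucc) (w.2 i.succ)

/-- The composition `𝔗^Θ_i = M₀^Θ ∘ ⋯ ∘ M_i^Θ` (with `M_i^Θ` applied first). -/
noncomputable def thetaFlow {p : ℕ} (MΘ : ℕ → (Fin p → ℝ) → (Fin p → ℝ)) :
    ℕ → (Fin p → ℝ) → (Fin p → ℝ)
  | 0 => MΘ 0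
  | (i + 1) => thetaFlow MΘ i ∘ MΘ (i + 1)

open scoped ENNReal

/-!
Let `F_i = ofReal f_i` and let `I_m(θ, ·)` be the unnormalised density of `z_m` obtained by
integrating `z_0, …, z_{m-1}` out of `∏_{i<m} F_i(θ, z_i, z_{i+1})`, so `I_0 = 1` and
`I_{m+1}(θ, c) = ∫ I_m(θ, b) F_m(θ, b, c) db`. Integrating `z_0, …, z_k` out of `ρ` shows that the
`(θ, z_{k+1})`-marginal of `Π` is proportional to `I_{k+1}`.

On the transport side, `(x_θ, x_{i+1}) ↦ (𝔗^Θ_i x_θ, M_i¹(x_θ, x_{i+1}))` factors through `M_i`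
followed by forgetting the middle coordinate, which `η_i` (a probability measure) does not see.
The density of `M_i`'s pushforward is the density of `η_Θ ⊗ η_i` times the transition
`F_i(𝔗^Θ_{i-1} x_θ, M_{i-1}¹(x_θ, x), y)`, so by Tonelli and the previous step the pushforward of
`η_Θ ⊗ η_{i+1}` is proportional to `I_{i+1}`. Two probability measures proportional to the same
measure are equal.
-/

namespace MeasureTheory

variable {α α' β β' γ : Type*} [MeasurableSpace α] [MeasurableSpace α'] [MeasurableSpace β]
  [MeasurableSpace β'] [MeasurableSpace γ]

theorem map_fst_snd_snd_prod (μ : Measure α) (ν : Measure β) (ξ : Measure γ) [SFinite μ]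
    [IsProbabilityMeasure ν] [SFinite ξ] :
    Measure.map (fun w : α × β × γ => (w.1, w.2.2)) (μ.prod (ν.prod ξ)) = μ.prod ξ := by
  rw [show (fun w : α × β × γ => (w.1, w.2.2)) = Prod.map id Prod.snd from rfl,
    ← Measure.map_prod_map _ _ measurable_id measurable_snd, Measure.map_id,
    Measure.map_snd_prod, measure_univ, one_smul]

theorem map_prod_eq_map_fst_snd_snd_map {δ : Type*} [MeasurableSpace δ] (μ : Measure α)
    (ν : Measure β) (ξ : Measure γ) [SFinite μ] [IsProbabilityMeasure ν] [SFinite ξ]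
    {A : α → α'} {B : α × β × γ → β'} {C : α × γ → γ} {T : α' → δ} (hA : Measurable A)
    (hB : Measurable B) (hC : Measurable C) (hT : Measurable T) :
    Measure.map (fun x => (T (A x.1), C x)) (μ.prod ξ) =
      Measure.map (fun v => (T v.1, v.2.2))
        (Measure.map (fun w => (A w.1, B w, C (w.1, w.2.2))) (μ.prod (ν.prod ξ))) := by
  rw [Measure.map_map (by fun_prop) (by fun_prop), ← map_fst_snd_snd_prod μ ν ξ,
    Measure.map_map (by fun_prop) (by fun_prop)]
  rfl

theorem map_withDensity_transition {μ : Measure α} {ν : Measure β} {ξ : Measure γ}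
    {μ' : Measure α'} {ν' : Measure β'} [SFinite ν] [SFinite ξ] [SFinite ν']
    {σ : α × β → ℝ≥0∞} (hσ : Measurable σ) {T : α → α'} (hT : Measurable T)
    {N : α × β → β'} (hN : Measurable N) {ψ : α' × β' → ℝ≥0∞} (hψ : Measurable ψ)
    {F : α' → β' → γ → ℝ≥0∞} (hF : Measurable fun w : α' × β' × γ => F w.1 w.2.1 w.2.2)
    (h : Measure.map (fun x => (T x.1, N x)) ((μ.prod ν).withDensity σ) =
      (μ'.prod ν').withDensity ψ) :
    Measure.map (fun v : α × β × γ => (T v.1, v.2.2))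
        ((μ.prod (ν.prod ξ)).withDensity fun v =>
          σ (v.1, v.2.1) * F (T v.1) (N (v.1, v.2.1)) v.2.2) =
      (μ'.prod ξ).withDensity fun x => ∫⁻ z, ψ (x.1, z) * F x.1 z x.2 ∂ν' := by
  refine Measure.ext_of_lintegral _ fun φ hφ => ?_
  set Φ : α' × β' → ℝ≥0∞ := fun t => ∫⁻ c, F t.1 t.2 c * φ (t.1, c) ∂ξ
  have hΦ : Measurable Φ := by fun_prop
  have hG : Measurable fun x : α × β => (T x.1, N x) := by fun_prop
  have hσF : Measurable fun v : α × β × γ => σ (v.1, v.2.1) * F (T v.1) (N (v.1, v.2.1)) v.2.2 := by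
    fun_prop
  have hleft : ∫⁻ v, σ (v.1, v.2.1) * F (T v.1) (N (v.1, v.2.1)) v.2.2 * φ (T v.1, v.2.2)
        ∂μ.prod (ν.prod ξ) = ∫⁻ x, σ x * Φ (T x.1, N x) ∂μ.prod ν := by
    rw [← (measurePreserving_prodAssoc μ ν ξ).lintegral_comp_emb
      MeasurableEquiv.prodAssoc.measurableEmbedding, lintegral_prod _ (by fun_prop)]
    refine lintegral_congr fun x => ?_
    rw [← lintegral_const_mul _ (by fun_prop)]
    exact lintegral_congr fun c => mul_assoc _ _ _
  have hright : ∫⁻ t, ψ t * Φ t ∂μ'.prod ν' =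
      ∫⁻ x, (∫⁻ z, ψ (x.1, z) * F x.1 z x.2 ∂ν') * φ x ∂μ'.prod ξ := by
    rw [lintegral_prod _ (by fun_prop), lintegral_prod _ (by fun_prop)]
    refine lintegral_congr fun θ => ?_
    calc ∫⁻ z, ψ (θ, z) * Φ (θ, z) ∂ν'
        = ∫⁻ z, ∫⁻ c, ψ (θ, z) * (F θ z c * φ (θ, c)) ∂ξ ∂ν' :=
          lintegral_congr fun z => (lintegral_const_mul _ (by fun_prop)).symm
      _ = ∫⁻ c, ∫⁻ z, ψ (θ, z) * (F θ z c * φ (θ, c)) ∂ν' ∂ξ :=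
          lintegral_lintegral_swap (by fun_prop)
      _ = _ := lintegral_congr fun c => by
          rw [← lintegral_mul_const _ (by fun_prop)]
          exact lintegral_congr fun z => (mul_assoc _ _ _).symm
  calc _ = ∫⁻ x, σ x * Φ (T x.1, N x) ∂μ.prod ν := by
        rw [lintegral_map hφ (by fun_prop),
          lintegral_withDensity_eq_lintegral_mul _ hσF (by fun_prop)]
        exact hleft
    _ = ∫⁻ t, Φ t ∂Measure.map (fun x => (T x.1, N x)) ((μ.prod ν).withDensity σ) := by
        rw [lintegral_map hΦ hG]
        exact (lintegral_withDensity_eq_lintegral_mul _ hσ (hΦ.comp hG)).symm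
    _ = _ := by
        rw [h, lintegral_withDensity_eq_lintegral_mul _ hψ hΦ,
          lintegral_withDensity_eq_lintegral_mul _ (by fun_prop) hφ]
        exact hright

theorem map_fst_snd_snd_withDensity {μ : Measure α} {ν : Measure β} {ξ : Measure γ} [SFinite μ]
    [SFinite ν] [SFinite ξ] {F : α → β → γ → ℝ≥0∞}
    (hF : Measurable fun w : α × β × γ => F w.1 w.2.1 w.2.2) :
    Measure.map (fun v : α × β × γ => (v.1, v.2.2))
        ((μ.prod (ν.prod ξ)).withDensity fun v => F v.1 v.2.1 v.2.2) =
      (μ.prod ξ).withDensity fun x => ∫⁻ z, F x.1 z x.2 ∂ν := by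
  simpa using map_withDensity_transition (σ := 1) measurable_const measurable_id measurable_snd
    (ψ := 1) measurable_const hF (by simp)

/-- The density `I_m(θ, ·)` of the header, for the potentials `F i = F_i(θ, ·, ·)` at fixed `θ`. -/
noncomputable def chainMarginal (ν : Measure β) (F : ℕ → β → β → ℝ≥0∞) : ℕ → β → ℝ≥0∞
  | 0 => 1
  | m + 1 => fun c => ∫⁻ b, chainMarginal ν F m b * F m b c ∂ν

theorem measurable_chainMarginal (ν : Measure β) [SFinite ν] {F : α → ℕ → β → β → ℝ≥0∞}
    {m : ℕ} (hF : ∀ i < m, Measurable fun w : α × β × β => F w.1 i w.2.1 w.2.2) :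
    Measurable fun x : α × β => chainMarginal ν (F x.1) m x.2 := by
  induction m with
  | zero => exact measurable_const
  | succ m ih =>
    have ih := ih fun i hi => hF i (hi.trans m.lt_succ_self)
    exact Measurable.lintegral_prod_right
      ((ih.comp (measurable_fst.fst.prodMk measurable_snd)).mul
        ((hF m m.lt_succ_self).comp
          (measurable_fst.fst.prodMk (measurable_snd.prodMk measurable_fst.snd))))

theorem chainMarginal_succ_mul (ν : Measure β) [SFinite ν] {F : α → ℕ → β → β → ℝ≥0∞} {m : ℕ}
    (hF : ∀ i ≤ m, Measurable fun w : α × β × β => F w.1 i w.2.1 w.2.2) (a K : ℝ≥0∞) (θ : α)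
    (c : β) :
    chainMarginal ν (F θ) (m + 1) c * (a * K) =
      ∫⁻ z, chainMarginal ν (F θ) m z * a * (F θ m z c * K) ∂ν := by
  have hz : Measurable fun z => chainMarginal ν (F θ) m z * F θ m z c :=
    ((measurable_chainMarginal ν fun i hi => hF i hi.le).comp
      (measurable_const.prodMk measurable_id)).mul
      ((hF m le_rfl).comp (measurable_const.prodMk (measurable_id.prodMk measurable_const)))
  rw [chainMarginal, ← lintegral_mul_const _ hz]
  exact lintegral_congr fun z => by ring

theorem map_eq_withDensity_chainMarginal_succ {μ : Measure α} {ν : Measure β} [SFinite μ]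
    [SFinite ν] {ηa : Measure α} {ηb ηc : Measure β} [SFinite ηa] [IsProbabilityMeasure ηb]
    [SFinite ηc] {σ : α × β → ℝ≥0∞} (hσ : Measurable σ)
    (hηab : ηa.prod ηb = (μ.prod ν).withDensity σ) {A T : α → α} {B : α × β × β → β}
    {C N : α × β → β} (hA : Measurable A) (hB : Measurable B) (hC : Measurable C)
    (hT : Measurable T) (hN : Measurable N) {F : α → ℕ → β → β → ℝ≥0∞} {m : ℕ}
    (hF : ∀ i ≤ m, Measurable fun w : α × β × β => F w.1 i w.2.1 w.2.2) {a K : ℝ≥0∞}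
    (hprev : Measure.map (fun x => (T x.1, N x)) (ηa.prod ηb) =
      (μ.prod ν).withDensity fun x => chainMarginal ν (F x.1) m x.2 * a)
    (hmap : Measure.map (fun w => (A w.1, B w, C (w.1, w.2.2))) (ηa.prod (ηb.prod ηc)) =
      (μ.prod (ν.prod ν)).withDensity fun w =>
        σ (w.1, w.2.1) * (F (T w.1) m (N (w.1, w.2.1)) w.2.2 * K)) :
    Measure.map (fun x => (T (A x.1), C x)) (ηa.prod ηc) =
      (μ.prod ν).withDensity fun x => chainMarginal ν (F x.1) (m + 1) x.2 * (a * K) := by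
  rw [map_prod_eq_map_fst_snd_snd_map ηa ηb ηc hA hB hC hT, hmap,
    map_withDensity_transition (F := fun θ z c => F θ m z c * K) hσ hT hN
      ((measurable_chainMarginal ν fun i hi => hF i hi.le).mul_const a)
      ((hF m le_rfl).mul_const K) (hηab ▸ hprev)]
  exact congrArg _ (funext fun x => (chainMarginal_succ_mul ν hF a K x.1 x.2).symm)

theorem measurable_chain_prod {F : ℕ → β → β → ℝ≥0∞} {m : ℕ}
    (hF : ∀ i < m, Measurable (Function.uncurry (F i))) :
    Measurable fun z : Fin (m + 1) → β => ∏ i : Fin m, F i (z i.castSucc) (z i.succ) :=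
  Finset.measurable_prod _ fun i _ =>
    (hF i i.isLt).comp (f := fun z : Fin (m + 1) → β => (z i.castSucc, z i.succ))
      ((measurable_pi_apply _).prodMk (measurable_pi_apply _))

theorem lintegral_mul_chain_prod (ν : Measure β) [SigmaFinite ν] {F : ℕ → β → β → ℝ≥0∞}
    {m : ℕ} (hF : ∀ i < m, Measurable (Function.uncurry (F i))) {φ : β → ℝ≥0∞}
    (hφ : Measurable φ) :
    ∫⁻ z : Fin (m + 1) → β, φ (z (Fin.last m)) * ∏ i : Fin m, F i (z i.castSucc) (z i.succ)
        ∂(Measure.pi fun _ => ν) =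
      ∫⁻ c, φ c * chainMarginal ν F m c ∂ν := by
  induction m generalizing φ with
  | zero =>
    have := (measurePreserving_funUnique ν (Fin 1)).lintegral_comp_emb
      (MeasurableEquiv.measurableEmbedding _) φ
    simp only [chainMarginal, Finset.univ_eq_empty, Finset.prod_empty, mul_one, Pi.one_apply]
    convert this using 3
    rfl
  | succ m ih =>
    have hF' : ∀ i < m, Measurable (Function.uncurry (F i)) :=
      fun i hi => hF i (hi.trans m.lt_succ_self)
    have hmeas : Measurable fun z : Fin (m + 2) → β =>
        φ (z (Fin.last (m + 1))) * ∏ i : Fin (m + 1), F i (z i.castSucc) (z i.succ) :=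
      (hφ.comp (measurable_pi_apply (Fin.last (m + 1)))).mul (measurable_chain_prod hF)
    let e := MeasurableEquiv.piFinSuccAbove (fun _ : Fin (m + 2) => β) (Fin.last (m + 1))
    rw [← (measurePreserving_piFinSuccAbove (fun _ => ν) (Fin.last (m + 1))).symm.lintegral_comp_emb
      e.symm.measurableEmbedding]
    refine (lintegral_prod _ (hmeas.comp e.symm.measurable).aemeasurable).trans
      (lintegral_congr fun c => ?_)
    have hsplit : ∀ y : Fin (m + 1) → β,
        φ (e.symm (c, y) (Fin.last (m + 1))) *
          ∏ i : Fin (m + 1), F i (e.symm (c, y) i.castSucc) (e.symm (c, y) i.succ) =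
        φ c * (F m (y (Fin.last m)) c * ∏ i : Fin m, F i (y i.castSucc) (y i.succ)) := by
      intro y
      simp only [e, MeasurableEquiv.piFinSuccAbove_symm_apply, Fin.insertNthEquiv_apply,
        Fin.insertNth_last', Fin.snoc_last, Fin.prod_univ_castSucc, Fin.snoc_castSucc,
        Fin.succ_castSucc, Fin.succ_last, Fin.val_last, Fin.val_castSucc]
      ring
    simp only [Function.comp_apply, hsplit]
    have hFc : Measurable fun b => F m b c :=
      (hF m m.lt_succ_self).comp (measurable_id.prodMk measurable_const)
    rw [lintegral_const_mul _ ?_, ih hF' hFc]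
    · simp only [chainMarginal, mul_comm]
    · exact (hFc.comp (measurable_pi_apply _)).fun_mul (measurable_chain_prod hF')

theorem map_withDensity_chain_prod (μ : Measure α) (ν : Measure β) [SigmaFinite ν]
    {F : α → ℕ → β → β → ℝ≥0∞} {m : ℕ}
    (hF : ∀ i < m, Measurable fun w : α × β × β => F w.1 i w.2.1 w.2.2) :
    Measure.map (fun w : α × (Fin (m + 1) → β) => (w.1, w.2 (Fin.last m)))
        ((μ.prod (Measure.pi fun _ => ν)).withDensity
          fun w => ∏ i : Fin m, F w.1 i (w.2 i.castSucc) (w.2 i.succ)) =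
      (μ.prod ν).withDensity fun x => chainMarginal ν (F x.1) m x.2 := by
  have hFθ : ∀ θ, ∀ i < m, Measurable (Function.uncurry (F θ i)) := fun θ i hi =>
    (hF i hi).comp (measurable_const.prodMk measurable_id)
  have hprod : Measurable fun w : α × (Fin (m + 1) → β) =>
      ∏ i : Fin m, F w.1 i (w.2 i.castSucc) (w.2 i.succ) :=
    Finset.measurable_prod _ fun i _ => (hF i i.isLt).comp
      (f := fun w : α × (Fin (m + 1) → β) => (w.1, w.2 i.castSucc, w.2 i.succ)) (by fun_prop)
  refine Measure.ext_of_lintegral _ fun φ hφ => ?_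
  rw [lintegral_map hφ (by fun_prop), lintegral_withDensity_eq_lintegral_mul _ hprod (by fun_prop),
    lintegral_withDensity_eq_lintegral_mul _ (measurable_chainMarginal ν hF) hφ,
    lintegral_prod _ (by fun_prop),
    lintegral_prod _ ((measurable_chainMarginal ν hF).mul hφ).aemeasurable]
  refine lintegral_congr fun θ => ?_
  have h := lintegral_mul_chain_prod ν (hFθ θ) (φ := fun c => φ (θ, c)) (by fun_prop)
  simp only [Pi.mul_apply]
  rw [lintegral_congr fun c => mul_comm _ (φ (θ, c)), ← h]
  exact lintegral_congr fun z => mul_comm _ _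

theorem Measure.eq_of_eq_smul_of_eq_smul {μ ν ρ : Measure α} [hμ₁ : IsProbabilityMeasure μ]
    [hν₁ : IsProbabilityMeasure ν] {c d : ℝ≥0∞} (hμ : μ = c • ρ) (hν : ν = d • ρ) : μ = ν := by
  have hc : c * ρ Set.univ = 1 := by simpa [hμ] using measure_univ (μ := μ)
  have hd : d * ρ Set.univ = 1 := by simpa [hν] using measure_univ (μ := ν)
  rw [hμ, hν, ENNReal.eq_inv_of_mul_eq_one_left hc, ENNReal.eq_inv_of_mul_eq_one_left hd]

theorem isProbabilityMeasure_withDensity_ofReal_div_integral {μ : Measure α} {f : α → ℝ}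
    (hf : Integrable f μ) (hf0 : 0 ≤ᵐ[μ] f) (h : ∫ x, f x ∂μ ≠ 0) :
    IsProbabilityMeasure (μ.withDensity fun x => ENNReal.ofReal (f x / ∫ x, f x ∂μ)) := by
  constructor
  rw [withDensity_apply _ MeasurableSet.univ, Measure.restrict_univ,
    ← ofReal_integral_eq_lintegral_ofReal (hf.div_const _)
      (hf0.mono fun x hx => div_nonneg hx (integral_nonneg_of_ae hf0)),
    integral_div, div_self h, ENNReal.ofReal_one]

end MeasureTheory

theorem measurable_thetaFlow {p k : ℕ} {MΘ : ℕ → (Fin p → ℝ) → (Fin p → ℝ)}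
    (hMΘ : ∀ i ≤ k, Measurable (MΘ i)) {m : ℕ} (hm : m ≤ k) : Measurable (thetaFlow MΘ m) := by
  induction m with
  | zero => exact hMΘ 0 hm
  | succ m ih => exact (ih (by omega)).comp (hMΘ (m + 1) hm)

theorem jpotential_nonneg {p n k : ℕ} {π₀ : (Fin p → ℝ) → (Fin n → ℝ) → (Fin n → ℝ) → ℝ}
    {q : ℕ → (Fin p → ℝ) → (Fin n → ℝ) → (Fin n → ℝ) → ℝ} {g : ℕ → (Fin p → ℝ) → (Fin n → ℝ) → ℝ}
    (hπ₀ : ∀ θ z z', 0 ≤ π₀ θ z z') (hq : ∀ i, 1 ≤ i → i ≤ k → ∀ θ z z', 0 ≤ q i θ z z')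
    (hg : ∀ i ≤ k + 1, ∀ θ z, 0 ≤ g i θ z) {i : ℕ} (hi : i ≤ k) (θ : Fin p → ℝ)
    (z z' : Fin n → ℝ) : 0 ≤ jpotential π₀ q g i θ z z' := by
  cases i with
  | zero => exact mul_nonneg (mul_nonneg (hπ₀ θ z z') (hg 0 (by omega) θ z)) (hg 1 (by omega) θ z')
  | succ j => exact mul_nonneg (hq (j + 1) (by omega) hi θ z z') (hg (j + 2) (by omega) θ z')

theorem measurable_jpotential {p n k : ℕ} {π₀ : (Fin p → ℝ) → (Fin n → ℝ) → (Fin n → ℝ) → ℝ}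
    {q : ℕ → (Fin p → ℝ) → (Fin n → ℝ) → (Fin n → ℝ) → ℝ} {g : ℕ → (Fin p → ℝ) → (Fin n → ℝ) → ℝ}
    (hπ₀ : Measurable fun w : (Fin p → ℝ) × (Fin n → ℝ) × (Fin n → ℝ) => π₀ w.1 w.2.1 w.2.2)
    (hq : ∀ i, 1 ≤ i → i ≤ k →
      Measurable fun w : (Fin p → ℝ) × (Fin n → ℝ) × (Fin n → ℝ) => q i w.1 w.2.1 w.2.2)
    (hg : ∀ i ≤ k + 1, Measurable fun w : (Fin p → ℝ) × (Fin n → ℝ) => g i w.1 w.2)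
    {i : ℕ} (hi : i ≤ k) :
    Measurable fun w : (Fin p → ℝ) × (Fin n → ℝ) × (Fin n → ℝ) =>
      jpotential π₀ q g i w.1 w.2.1 w.2.2 := by
  cases i with
  | zero =>
    exact (hπ₀.mul ((hg 0 (by omega)).comp (measurable_fst.prodMk measurable_snd.fst))).mul
      ((hg 1 (by omega)).comp (measurable_fst.prodMk measurable_snd.snd))
  | succ j =>
    exact (hq (j + 1) (by omega) hi).mul
      ((hg (j + 2) (by omega)).comp (measurable_fst.prodMk measurable_snd.snd))

theorem ENNReal.ofReal_div_eq_mul_ofReal_inv {x : ℝ} (hx : 0 ≤ x) (c : ℝ) :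
    ENNReal.ofReal (x / c) = ENNReal.ofReal x * ENNReal.ofReal c⁻¹ := by
  rw [div_eq_mul_inv, ENNReal.ofReal_mul hx]

theorem ENNReal.ofReal_mul_mul_div {a b x : ℝ} (ha : 0 ≤ a) (hb : 0 ≤ b) (hx : 0 ≤ x) (c : ℝ) :
    ENNReal.ofReal (a * b * x / c) =
      ENNReal.ofReal a * ENNReal.ofReal b * ENNReal.ofReal x * ENNReal.ofReal c⁻¹ := by
  rw [ENNReal.ofReal_div_eq_mul_ofReal_inv (mul_nonneg (mul_nonneg ha hb) hx),
    ENNReal.ofReal_mul (mul_nonneg ha hb), ENNReal.ofReal_mul ha]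

theorem jsmoothingDensity_nonneg {p n k : ℕ} {π₀ : (Fin p → ℝ) → (Fin n → ℝ) → (Fin n → ℝ) → ℝ}
    {q : ℕ → (Fin p → ℝ) → (Fin n → ℝ) → (Fin n → ℝ) → ℝ} {g : ℕ → (Fin p → ℝ) → (Fin n → ℝ) → ℝ}
    (hf : ∀ i ≤ k, ∀ θ z z', 0 ≤ jpotential π₀ q g i θ z z')
    (w : (Fin p → ℝ) × (Fin (k + 2) → Fin n → ℝ)) : 0 ≤ jsmoothingDensity π₀ q g w :=
  Finset.prod_nonneg fun i _ => hf i (Nat.lt_succ_iff.mp i.isLt) _ _ _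

theorem map_withDensity_jsmoothingDensity {p n k : ℕ}
    {π₀ : (Fin p → ℝ) → (Fin n → ℝ) → (Fin n → ℝ) → ℝ}
    {q : ℕ → (Fin p → ℝ) → (Fin n → ℝ) → (Fin n → ℝ) → ℝ} {g : ℕ → (Fin p → ℝ) → (Fin n → ℝ) → ℝ}
    (hf0 : ∀ i ≤ k, ∀ θ z z', 0 ≤ jpotential π₀ q g i θ z z')
    (hf : ∀ i ≤ k, Measurable fun w : (Fin p → ℝ) × (Fin n → ℝ) × (Fin n → ℝ) =>
      jpotential π₀ q g i w.1 w.2.1 w.2.2) :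
    Measure.map (fun w : (Fin p → ℝ) × (Fin (k + 2) → Fin n → ℝ) => (w.1, w.2 (Fin.last (k + 1))))
        ((volume : Measure ((Fin p → ℝ) × (Fin (k + 2) → Fin n → ℝ))).withDensity
          fun w => ENNReal.ofReal (jsmoothingDensity (k := k) π₀ q g w /
            ∫ w, jsmoothingDensity (k := k) π₀ q g w)) =
      ENNReal.ofReal (∫ w, jsmoothingDensity (k := k) π₀ q g w)⁻¹ •
        (volume.prod volume).withDensity fun x => chainMarginal volume
          (fun i z z' => ENNReal.ofReal (jpotential π₀ q g i x.1 z z')) (k + 1) x.2 := by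
  have hdens : (fun w => ENNReal.ofReal (jsmoothingDensity (k := k) π₀ q g w /
        ∫ w, jsmoothingDensity (k := k) π₀ q g w)) =
      ENNReal.ofReal (∫ w, jsmoothingDensity (k := k) π₀ q g w)⁻¹ • fun w =>
        ∏ i : Fin (k + 1),
          ENNReal.ofReal (jpotential π₀ q g i w.1 (w.2 i.castSucc) (w.2 i.succ)) := by
    funext w
    rw [Pi.smul_apply, smul_eq_mul, ENNReal.ofReal_div_eq_mul_ofReal_inv
      (jsmoothingDensity_nonneg hf0 w), mul_comm, jsmoothingDensity,
      ENNReal.ofReal_prod_of_nonneg fun (i : Fin (k + 1)) _ =>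
        hf0 i (Nat.lt_succ_iff.mp i.isLt) _ _ _]
  rw [hdens, withDensity_smul' _ _ ENNReal.ofReal_ne_top, Measure.map_smul]
  exact congrArg _ (map_withDensity_chain_prod volume volume
    (F := fun θ i z z' => ENNReal.ofReal (jpotential π₀ q g i θ z z'))
    fun i hi => (hf i (by omega)).ennreal_ofReal)

theorem map_thetaFlow_eq_smul_withDensity_chainMarginal {p k : ℕ} {β : Type*} [MeasurableSpace β]
    {μ : Measure (Fin p → ℝ)} {ν : Measure β} [SFinite μ] [SFinite ν]
    {ηΘ : Measure (Fin p → ℝ)} {ρΘ : (Fin p → ℝ) → ℝ≥0∞} (hηΘ : ηΘ = μ.withDensity ρΘ)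
    (hρΘ : Measurable ρΘ) {η : ℕ → Measure β} {ρ : ℕ → β → ℝ≥0∞}
    (hη : ∀ i, 1 ≤ i → i ≤ k → η i = ν.withDensity (ρ i))
    (hρ : ∀ i, 1 ≤ i → i ≤ k → Measurable (ρ i))
    (hprob : ∀ i ≤ k + 1, IsProbabilityMeasure (η i))
    {MΘ : ℕ → (Fin p → ℝ) → (Fin p → ℝ)} {M0 : ℕ → (Fin p → ℝ) × β × β → β}
    {M1 : ℕ → (Fin p → ℝ) × β → β} (hMΘ : ∀ i ≤ k, Measurable (MΘ i))
    (hM0 : ∀ i ≤ k, Measurable (M0 i)) (hM1 : ∀ i ≤ k, Measurable (M1 i))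
    {F : (Fin p → ℝ) → ℕ → β → β → ℝ≥0∞}
    (hF : ∀ i ≤ k, Measurable fun w : (Fin p → ℝ) × β × β => F w.1 i w.2.1 w.2.2)
    (K : ℕ → ℝ≥0∞)
    (hmap0 : Measure.map (fun w : (Fin p → ℝ) × β × β => (MΘ 0 w.1, M0 0 w, M1 0 (w.1, w.2.2)))
        (ηΘ.prod ((η 0).prod (η 1))) =
      (μ.prod (ν.prod ν)).withDensity fun w => F w.1 0 w.2.1 w.2.2 * K 0)
    (hmapi : ∀ i, 1 ≤ i → i ≤ k →
      Measure.map (fun w : (Fin p → ℝ) × β × β => (MΘ i w.1, M0 i w, M1 i (w.1, w.2.2)))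
          (ηΘ.prod ((η i).prod (η (i + 1)))) =
        (μ.prod (ν.prod ν)).withDensity fun w =>
          ρΘ w.1 * ρ i w.2.1 * F (thetaFlow MΘ (i - 1) w.1) i (M1 (i - 1) (w.1, w.2.1)) w.2.2 *
            K i) :
    ∃ a : ℝ≥0∞, Measure.map (fun x => (thetaFlow MΘ k x.1, M1 k x)) (ηΘ.prod (η (k + 1))) =
      a • (μ.prod ν).withDensity fun x => chainMarginal ν (F x.1) (k + 1) x.2 := by
  have : SFinite ηΘ := hηΘ ▸ inferInstance
  suffices ∀ m ≤ k, ∃ a : ℝ≥0∞,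
      Measure.map (fun x => (thetaFlow MΘ m x.1, M1 m x)) (ηΘ.prod (η (m + 1))) =
        (μ.prod ν).withDensity fun x => chainMarginal ν (F x.1) (m + 1) x.2 * a by
    obtain ⟨a, ha⟩ := this k le_rfl
    refine ⟨a, ha.trans ?_⟩
    rw [← withDensity_smul _ (measurable_chainMarginal ν fun i hi => hF i (by omega))]
    exact congrArg _ (funext fun x => mul_comm _ _)
  intro m hm
  induction m with
  | zero =>
    have := hprob 0 (by omega)
    have := hprob 1 (by omega)
    refine ⟨K 0, (map_prod_eq_map_fst_snd_snd_map ηΘ (η 0) (η 1) (hMΘ 0 hm) (hM0 0 hm)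
      (hM1 0 hm) measurable_id).trans ?_⟩
    simp only [id, hmap0]
    rw [map_fst_snd_snd_withDensity (F := fun θ z c => F θ 0 z c * K 0) ((hF 0 hm).mul_const _)]
    congr 1
    funext x
    simpa [chainMarginal] using
      (chainMarginal_succ_mul ν (m := 0) (fun i hi => hF i (by omega)) 1 (K 0) x.1 x.2).symm
  | succ m ih =>
    have := hprob (m + 1) (by omega)
    have := hprob (m + 2) (by omega)
    obtain ⟨a, ha⟩ := ih (by omega)
    refine ⟨a * K (m + 1), map_eq_withDensity_chainMarginal_succ
      (σ := fun x => ρΘ x.1 * ρ (m + 1) x.2)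
      ((hρΘ.comp measurable_fst).mul ((hρ (m + 1) (by omega) hm).comp measurable_snd))
      (by rw [hηΘ, hη (m + 1) (by omega) hm, prod_withDensity hρΘ (hρ (m + 1) (by omega) hm)])
      (hMΘ (m + 1) hm) (hM0 (m + 1) hm) (hM1 (m + 1) hm) (measurable_thetaFlow hMΘ (by omega))
      (hM1 m (by omega)) (fun i hi => hF i (by omega)) ha ?_⟩
    rw [hmapi (m + 1) (by omega) hm]
    simp only [Nat.add_sub_cancel, mul_assoc (_ * _ : ℝ≥0∞)]

theorem joint_filtering_of_recursion_general
    (p n k : ℕ)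
    (π₀ : (Fin p → ℝ) → (Fin n → ℝ) → (Fin n → ℝ) → ℝ)
    (q : ℕ → (Fin p → ℝ) → (Fin n → ℝ) → (Fin n → ℝ) → ℝ)
    (g : ℕ → (Fin p → ℝ) → (Fin n → ℝ) → ℝ)
    (hπ₀ : Measurable (fun w : (Fin p → ℝ) × (Fin n → ℝ) × (Fin n → ℝ) => π₀ w.1 w.2.1 w.2.2))
    (hπ₀pos : ∀ θ z z', 0 ≤ π₀ θ z z')
    (hq : ∀ i, 1 ≤ i → i ≤ k →
      Measurable (fun w : (Fin p → ℝ) × (Fin n → ℝ) × (Fin n → ℝ) => q i w.1 w.2.1 w.2.2))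
    (hqpos : ∀ i, 1 ≤ i → i ≤ k → ∀ θ z z', 0 ≤ q i θ z z')
    (hg : ∀ i ≤ k + 1, Measurable (fun w : (Fin p → ℝ) × (Fin n → ℝ) => g i w.1 w.2))
    (hgpos : ∀ i ≤ k + 1, ∀ θ z, 0 ≤ g i θ z)
    (hρint : Integrable (jsmoothingDensity (k := k) π₀ q g))
    (hρmass : 0 < ∫ w, jsmoothingDensity (k := k) π₀ q g w)
    (ηΘ : Measure (Fin p → ℝ)) (eΘ : (Fin p → ℝ) → ℝ)
    (hηΘprob : IsProbabilityMeasure ηΘ) (heΘmeas : Measurable eΘ)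
    (hηΘd : ηΘ = (volume : Measure (Fin p → ℝ)).withDensity (fun θ => ENNReal.ofReal (eΘ θ)))
    (heΘpos : ∀ θ, 0 < eΘ θ)
    (η : ℕ → Measure (Fin n → ℝ)) (e : ℕ → (Fin n → ℝ) → ℝ)
    (hηprob : ∀ i ≤ k + 1, IsProbabilityMeasure (η i))
    (hemeas : ∀ i ≤ k + 1, Measurable (e i))
    (hηd : ∀ i ≤ k + 1,
      η i = (volume : Measure (Fin n → ℝ)).withDensity (fun x => ENNReal.ofReal (e i x)))
    (hepos : ∀ i ≤ k + 1, ∀ x, 0 < e i x)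
    (MΘ : ℕ → (Fin p → ℝ) → (Fin p → ℝ))
    (M0 : ℕ → (Fin p → ℝ) × (Fin n → ℝ) × (Fin n → ℝ) → (Fin n → ℝ))
    (M1 : ℕ → (Fin p → ℝ) × (Fin n → ℝ) → (Fin n → ℝ))
    (hMΘ : ∀ i ≤ k, Measurable (MΘ i))
    (hM0 : ∀ i ≤ k, Measurable (M0 i)) (hM1 : ∀ i ≤ k, Measurable (M1 i))
    (c : ℕ → ℝ)
    (hmap0 : Measure.map
        (fun w : (Fin p → ℝ) × (Fin n → ℝ) × (Fin n → ℝ) =>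
          (MΘ 0 w.1, M0 0 w, M1 0 (w.1, w.2.2)))
        (ηΘ.prod ((η 0).prod (η 1))) =
      (volume : Measure ((Fin p → ℝ) × (Fin n → ℝ) × (Fin n → ℝ))).withDensity
        (fun w => ENNReal.ofReal (jpotential π₀ q g 0 w.1 w.2.1 w.2.2 / c 0)))
    (hmapi : ∀ i, 1 ≤ i → i ≤ k →
      Measure.map
          (fun w : (Fin p → ℝ) × (Fin n → ℝ) × (Fin n → ℝ) =>
            (MΘ i w.1, M0 i w, M1 i (w.1, w.2.2)))
          (ηΘ.prod ((η i).prod (η (i + 1)))) =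
        (volume : Measure ((Fin p → ℝ) × (Fin n → ℝ) × (Fin n → ℝ))).withDensity
          (fun w => ENNReal.ofReal
            (eΘ w.1 * e i w.2.1 *
              jpotential π₀ q g i (thetaFlow MΘ (i - 1) w.1) (M1 (i - 1) (w.1, w.2.1)) w.2.2
              / c i))) :
    Measure.map
        (fun w : (Fin p → ℝ) × (Fin n → ℝ) => (thetaFlow MΘ k w.1, M1 k w))
        (ηΘ.prod (η (k + 1))) =
      Measure.map
        (fun w : (Fin p → ℝ) × (Fin (k + 2) → Fin n → ℝ) => (w.1, w.2 (Fin.last (k + 1))))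
        ((volume : Measure ((Fin p → ℝ) × (Fin (k + 2) → Fin n → ℝ))).withDensity
          (fun w => ENNReal.ofReal (jsmoothingDensity (k := k) π₀ q g w /
            ∫ w, jsmoothingDensity (k := k) π₀ q g w))) := by
  have hf0 : ∀ i ≤ k, ∀ θ z z', 0 ≤ jpotential π₀ q g i θ z z' :=
    fun i hi => jpotential_nonneg hπ₀pos hqpos hgpos hi
  have hf : ∀ i ≤ k, Measurable fun w : (Fin p → ℝ) × (Fin n → ℝ) × (Fin n → ℝ) =>
      jpotential π₀ q g i w.1 w.2.1 w.2.2 := fun i hi => measurable_jpotential hπ₀ hq hg hi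
  obtain ⟨a, ha⟩ := map_thetaFlow_eq_smul_withDensity_chainMarginal hηΘd heΘmeas.ennreal_ofReal
    (fun i _ hi => hηd i (by omega)) (fun i _ hi => (hemeas i (by omega)).ennreal_ofReal) hηprob
    hMΘ hM0 hM1 (F := fun θ i z z' => ENNReal.ofReal (jpotential π₀ q g i θ z z'))
    (fun i hi => (hf i hi).ennreal_ofReal) (fun i => ENNReal.ofReal (c i)⁻¹)
    (hmap0.trans (congrArg _ (funext fun w =>
      ENNReal.ofReal_div_eq_mul_ofReal_inv (hf0 0 k.zero_le _ _ _) _)))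
    (fun i hi₁ hi => (hmapi i hi₁ hi).trans (congrArg _ (funext fun w =>
      ENNReal.ofReal_mul_mul_div (heΘpos _).le (hepos i (by omega) _).le (hf0 i hi _ _ _) _)))
  have := hηprob (k + 1) le_rfl
  have := isProbabilityMeasure_withDensity_ofReal_div_integral hρint
    (ae_of_all _ (jsmoothingDensity_nonneg hf0)) hρmass.ne'
  have hT := measurable_thetaFlow hMΘ le_rfl
  have hM1k := hM1 k le_rfl
  exact Measure.eq_of_eq_smul_of_eq_smul (hμ₁ := Measure.isProbabilityMeasure_map (by fun_prop))
    (hν₁ := Measure.isProbabilityMeasure_map (by fun_prop)) ha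
    (map_withDensity_jsmoothingDensity hf0 hf)

/-- **Joint parameter and state filtering via decomposable transports.**
Under the transport recursion of the decomposition theorem for joint parameter and state
estimation, the map `(x_θ, x_{k+1}) ↦ (𝔗^Θ_k(x_θ), M_k¹(x_θ, x_{k+1}))` pushes
`η_Θ ⊗ η_{k+1}` forward to the `(θ, z_{k+1})`-marginal of the joint posterior `Π`. -/
theorem joint_filtering_of_recursion
    (p n k : ℕ) (hp : 0 < p) (hn : 0 < n)
    (π₀ : (Fin p → ℝ) → (Fin n → ℝ) → (Fin n → ℝ) → ℝ)
    (q : ℕ → (Fin p → ℝ) → (Fin n → ℝ) → (Fin n → ℝ) → ℝ)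
    (g : ℕ → (Fin p → ℝ) → (Fin n → ℝ) → ℝ)
    (hπ₀ : Measurable (fun w : (Fin p → ℝ) × (Fin n → ℝ) × (Fin n → ℝ) => π₀ w.1 w.2.1 w.2.2))
    (hπ₀pos : ∀ θ z z', 0 ≤ π₀ θ z z')
    (hq : ∀ i, 1 ≤ i → i ≤ k →
      Measurable (fun w : (Fin p → ℝ) × (Fin n → ℝ) × (Fin n → ℝ) => q i w.1 w.2.1 w.2.2))
    (hqpos : ∀ i, 1 ≤ i → i ≤ k → ∀ θ z z', 0 ≤ q i θ z z')
    (hg : ∀ i ≤ k + 1, Measurable (fun w : (Fin p → ℝ) × (Fin n → ℝ) => g i w.1 w.2))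
    (hgpos : ∀ i ≤ k + 1, ∀ θ z, 0 ≤ g i θ z)
    (hρpos : ∀ w, 0 < jsmoothingDensity (k := k) π₀ q g w)
    (hρint : Integrable (jsmoothingDensity (k := k) π₀ q g))
    (hρmass : 0 < ∫ w, jsmoothingDensity (k := k) π₀ q g w)
    (ηΘ : Measure (Fin p → ℝ)) (eΘ : (Fin p → ℝ) → ℝ)
    (hηΘprob : IsProbabilityMeasure ηΘ) (heΘmeas : Measurable eΘ)
    (hηΘd : ηΘ = (volume : Measure (Fin p → ℝ)).withDensity (fun θ => ENNReal.ofReal (eΘ θ)))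
    (heΘpos : ∀ θ, 0 < eΘ θ)
    (η : ℕ → Measure (Fin n → ℝ)) (e : ℕ → (Fin n → ℝ) → ℝ)
    (hηprob : ∀ i ≤ k + 1, IsProbabilityMeasure (η i))
    (hemeas : ∀ i ≤ k + 1, Measurable (e i))
    (hηd : ∀ i ≤ k + 1,
      η i = (volume : Measure (Fin n → ℝ)).withDensity (fun x => ENNReal.ofReal (e i x)))
    (hepos : ∀ i ≤ k + 1, ∀ x, 0 < e i x)
    (MΘ : ℕ → (Fin p → ℝ) → (Fin p → ℝ))
    (M0 : ℕ → (Fin p → ℝ) × (Fin n → ℝ) × (Fin n → ℝ) → (Fin n → ℝ))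
    (M1 : ℕ → (Fin p → ℝ) × (Fin n → ℝ) → (Fin n → ℝ))
    (hMΘ : ∀ i ≤ k, Measurable (MΘ i))
    (hM0 : ∀ i ≤ k, Measurable (M0 i)) (hM1 : ∀ i ≤ k, Measurable (M1 i))
    (c : ℕ → ℝ)
    (hc0 : c 0 = ∫ w : (Fin p → ℝ) × (Fin n → ℝ) × (Fin n → ℝ),
      jpotential π₀ q g 0 w.1 w.2.1 w.2.2)
    (hf0int : Integrable (fun w : (Fin p → ℝ) × (Fin n → ℝ) × (Fin n → ℝ) =>
      jpotential π₀ q g 0 w.1 w.2.1 w.2.2))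
    (hmap0 : Measure.map
        (fun w : (Fin p → ℝ) × (Fin n → ℝ) × (Fin n → ℝ) =>
          (MΘ 0 w.1, M0 0 w, M1 0 (w.1, w.2.2)))
        (ηΘ.prod ((η 0).prod (η 1))) =
      (volume : Measure ((Fin p → ℝ) × (Fin n → ℝ) × (Fin n → ℝ))).withDensity
        (fun w => ENNReal.ofReal (jpotential π₀ q g 0 w.1 w.2.1 w.2.2 / c 0)))
    (hci : ∀ i, 1 ≤ i → i ≤ k →
      c i = ∫ w : (Fin p → ℝ) × (Fin n → ℝ) × (Fin n → ℝ),
        eΘ w.1 * e i w.2.1 *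
          jpotential π₀ q g i (thetaFlow MΘ (i - 1) w.1) (M1 (i - 1) (w.1, w.2.1)) w.2.2)
    (hciint : ∀ i, 1 ≤ i → i ≤ k →
      Integrable (fun w : (Fin p → ℝ) × (Fin n → ℝ) × (Fin n → ℝ) =>
        eΘ w.1 * e i w.2.1 *
          jpotential π₀ q g i (thetaFlow MΘ (i - 1) w.1) (M1 (i - 1) (w.1, w.2.1)) w.2.2))
    (hcipos : ∀ i, 1 ≤ i → i ≤ k → 0 < c i)
    (hmapi : ∀ i, 1 ≤ i → i ≤ k →
      Measure.map
          (fun w : (Fin p → ℝ) × (Fin n → ℝ) × (Fin n → ℝ) =>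
            (MΘ i w.1, M0 i w, M1 i (w.1, w.2.2)))
          (ηΘ.prod ((η i).prod (η (i + 1)))) =
        (volume : Measure ((Fin p → ℝ) × (Fin n → ℝ) × (Fin n → ℝ))).withDensity
          (fun w => ENNReal.ofReal
            (eΘ w.1 * e i w.2.1 *
              jpotential π₀ q g i (thetaFlow MΘ (i - 1) w.1) (M1 (i - 1) (w.1, w.2.1)) w.2.2
              / c i))) :
    Measure.map
        (fun w : (Fin p → ℝ) × (Fin n → ℝ) => (thetaFlow MΘ k w.1, M1 k w))
        (ηΘ.prod (η (k + 1))) =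
      Measure.map
        (fun w : (Fin p → ℝ) × (Fin (k + 2) → Fin n → ℝ) => (w.1, w.2 (Fin.last (k + 1))))
        ((volume : Measure ((Fin p → ℝ) × (Fin (k + 2) → Fin n → ℝ))).withDensity
          (fun w => ENNReal.ofReal (jsmoothingDensity (k := k) π₀ q g w /
            ∫ w, jsmoothingDensity (k := k) π₀ q g w))) :=
  joint_filtering_of_recursion_general p n k π₀ q g hπ₀ hπ₀pos hq hqpos hg hgpos hρint hρmass ηΘ eΘ
    hηΘprob heΘmeas hηΘd heΘpos η e hηprob hemeas hηd hepos MΘ M0 M1 hMΘ hM0 hM1 c hmap0 hmapi
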